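/- Let H be a locally compact Hausdorff topological group with left Haar measure μ_H, let m : H → (0,∞) be a weight (continuous with m(xy) ≤ m(x)m(y)), let U ⊆ H be a compact set, and let f, g : H → [0,∞) be continuous. Then ∫_H sup_{y∈U} (f∗g)(xy) · m(x) dμ_H(x) ≤ ( ∫_H f(x) m(x) dμ_H(x) ) · ( ∫_H sup_{y∈U} g(xy) · m(x) dμ_H(x) ), where (f∗g)(x) = ∫_H f(y) g(y⁻¹x) dμ_H(y). In particular, the weighted Wiener-amalgam norm of a convolution is bounded by ‖f‖_{L¹_m}·‖g‖_{W(C⁰,L¹_m)}. -/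

import Mathlib

/-!
Submultiplicativity gives `m x ≤ m z * m (z⁻¹ * x)`, and `M_U (f ∗ g) ≤ f ∗ M_U g` pointwise, so the
left side is at most `∫∫ k z * Ψ (z⁻¹ * x) dz dx` with `k = f m` and `Ψ = (M_U g) m`; exchanging the
integrals and using left invariance, this is `(∫ k) (∫ Ψ)`.

`H` need be neither σ-compact nor second countable, so Tonelli's theorem is not available as is.
When both integrals are finite, the supports of `k` and `Ψ` lie in σ-compact sets (an open set of
finite Haar measure meets only countably many cosets of an open σ-compact subgroup). Fatou's lemma,
applied to compactly supported cutoffs of the integrand, then reduces the exchange of integrals to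
Fubini's theorem for compactly supported continuous functions.
-/

open MeasureTheory ENNReal Set Filter Function
open scoped Pointwise NNReal

theorem IsSigmaCompact.prod {X Y : Type*} [TopologicalSpace X] [TopologicalSpace Y]
    {s : Set X} {t : Set Y} (hs : IsSigmaCompact s) (ht : IsSigmaCompact t) :
    IsSigmaCompact (s ×ˢ t) := by
  obtain ⟨K, hK, rfl⟩ := hs
  obtain ⟨L, hL, rfl⟩ := ht
  rw [← iUnion_prod]
  exact isSigmaCompact_iUnion_of_isCompact _ fun i => (hK i.1).prod (hL i.2)

theorem IsSigmaCompact.exists_cutoff {X : Type*} [TopologicalSpace X] [LocallyCompactSpace X]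
    [T2Space X] {R : Set X} (hR : IsSigmaCompact R) :
    ∃ θ : ℕ → X → ℝ≥0, (∀ n, Continuous (θ n)) ∧ (∀ n, HasCompactSupport (θ n)) ∧
      (∀ n, θ n ≤ 1) ∧ ∀ x ∈ R, ∀ᶠ n in atTop, θ n x = 1 := by
  obtain ⟨K, hK, rfl⟩ := hR
  have hacc (n : ℕ) : IsCompact (accumulate K n) := isCompact_accumulate hK n
  choose φ hφ1 _ hφc hφ01 using fun n =>
    exists_continuous_one_zero_of_isCompact (hacc n) isClosed_empty (disjoint_empty _)
  refine ⟨fun n => Real.toNNReal ∘ φ n, fun n => continuous_real_toNNReal.comp (φ n).continuous,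
    fun n => (hφc n).comp_left Real.toNNReal_zero, fun n x => ?_, fun x hx => ?_⟩
  · simpa using (hφ01 n x).2
  · obtain ⟨N, hN⟩ := mem_iUnion.1 (iUnion_accumulate (s := K) ▸ hx)
    filter_upwards [eventually_ge_atTop N] with n hn
    simp [hφ1 n (monotone_accumulate hn hN)]

theorem exists_openSubgroup_isSigmaCompact (G : Type*) [Group G] [TopologicalSpace G]
    [IsTopologicalGroup G] [LocallyCompactSpace G] :
    ∃ S : OpenSubgroup G, IsSigmaCompact (S : Set G) := by
  obtain ⟨K, hK, hK1⟩ := exists_compact_mem_nhds (1 : G)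
  let S := Subgroup.closure K
  have hS : IsOpen (S : Set G) :=
    S.isOpen_of_mem_nhds (Filter.mem_of_superset hK1 Subgroup.subset_closure)
  refine ⟨⟨S, hS⟩, ?_⟩
  have hpow (n : ℕ) : IsCompact ((K ∪ K⁻¹) ^ n) := by
    induction n with
    | zero => simp
    | succ n ih => rw [pow_succ]; exact ih.mul (hK.union hK.inv)
  refine (isSigmaCompact_iUnion_of_isCompact _ hpow).of_isClosed_subset
    (OpenSubgroup.isClosed ⟨S, hS⟩) fun x hx => ?_
  change x ∈ S.toSubmonoid at hx
  rw [Subgroup.closure_toSubmonoid] at hx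
  induction hx using Submonoid.closure_induction with
  | mem x hx => exact mem_iUnion.2 ⟨1, by simpa using hx⟩
  | one => exact mem_iUnion.2 ⟨0, by simp⟩
  | mul x y _ _ hx hy =>
    obtain ⟨m, hm⟩ := mem_iUnion.1 hx
    obtain ⟨n, hn⟩ := mem_iUnion.1 hy
    exact mem_iUnion.2 ⟨m + n, pow_add (K ∪ K⁻¹) m n ▸ mul_mem_mul hm hn⟩

theorem IsOpen.exists_isSigmaCompact_superset {G : Type*} [Group G] [TopologicalSpace G]
    [IsTopologicalGroup G] [LocallyCompactSpace G] [MeasurableSpace G] [OpensMeasurableSpace G]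
    (μ : Measure G) [μ.IsOpenPosMeasure] {O : Set G} (hO : IsOpen O) (hμO : μ O ≠ ∞) :
    ∃ R, IsSigmaCompact R ∧ O ⊆ R := by
  obtain ⟨S, hS⟩ := exists_openSubgroup_isSigmaCompact G
  let coset (c : G ⧸ (S : Subgroup G)) : Set G := QuotientGroup.mk ⁻¹' {c}
  have hopen (c) : IsOpen (coset c) := (isOpen_discrete {c}).preimage QuotientGroup.continuous_mk
  have hsigma (c) : IsSigmaCompact (coset c) := by
    obtain ⟨a, rfl⟩ := QuotientGroup.mk_surjective c
    convert hS.image (continuous_const_mul a) using 1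
    ext x
    simp [coset, image_mul_left, QuotientGroup.eq, eq_comm]
  have hcount : {c | 0 < μ (O ∩ coset c)}.Countable := by
    refine Measure.countable_meas_pos_of_disjoint_of_meas_iUnion_ne_top μ
      (fun c => (hO.inter (hopen c)).measurableSet) ?_ ?_
    · intro c d hcd
      exact ((disjoint_singleton.2 hcd).preimage QuotientGroup.mk).mono inter_subset_right
        inter_subset_right
    · convert hμO using 2
      ext x
      simp [coset]
  refine ⟨⋃ c ∈ {c | 0 < μ (O ∩ coset c)}, coset c,
    isSigmaCompact_biUnion hcount fun c _ => hsigma c, fun x hx => mem_biUnion ?_ rfl⟩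
  exact (hO.inter (hopen _)).measure_pos μ ⟨x, hx, rfl⟩

theorem Continuous.exists_isSigmaCompact_superset_support {G : Type*} [Group G]
    [TopologicalSpace G] [IsTopologicalGroup G] [LocallyCompactSpace G] [MeasurableSpace G]
    [OpensMeasurableSpace G]
    (μ : Measure G) [μ.IsOpenPosMeasure] {f : G → ℝ≥0} (hf : Continuous f)
    (hfμ : ∫⁻ x, f x ∂μ ≠ ∞) : ∃ R, IsSigmaCompact R ∧ support f ⊆ R := by
  have hlevel (ε : ℝ≥0) (hε : ε ≠ 0) : ∃ R, IsSigmaCompact R ∧ {x | ε < f x} ⊆ R := by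
    refine (isOpen_lt continuous_const hf).exists_isSigmaCompact_superset μ ?_
    refine (lt_of_le_of_lt ?_ (ENNReal.div_lt_top hfμ (coe_ne_zero.2 hε))).ne
    calc μ {x | ε < f x} ≤ μ {x | (ε : ℝ≥0∞) ≤ f x} :=
          measure_mono fun x hx => coe_le_coe.2 (le_of_lt hx)
      _ ≤ (∫⁻ x, f x ∂μ) / ε :=
          meas_ge_le_lintegral_div hf.measurable.coe_nnreal_ennreal.aemeasurable
            (coe_ne_zero.2 hε) coe_ne_top
  choose R hR hfR using fun n : ℕ => hlevel (1 / (n + 1)) (by positivity)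
  refine ⟨⋃ n, R n, isSigmaCompact_iUnion R hR, fun x hx => mem_iUnion.2 ?_⟩
  obtain ⟨n, hn⟩ := exists_nat_one_div_lt (pos_iff_ne_zero.2 hx)
  exact ⟨n, hfR n hn⟩

section CompactSupport

variable {X Y : Type*} [TopologicalSpace X] [TopologicalSpace Y] [MeasurableSpace Y]
  {ν : Measure Y} {F : X → Y → ℝ≥0}

theorem lintegral_eq_ofReal_integral_of_hasCompactSupport [R1Space Y] [OpensMeasurableSpace Y]
    [IsFiniteMeasureOnCompacts ν] (hF : Continuous (uncurry F))
    (hFc : HasCompactSupport (uncurry F)) (x : X) :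
    ∫⁻ y, F x y ∂ν = ENNReal.ofReal (∫ y, (F x y : ℝ) ∂ν) := by
  refine lintegral_coe_eq_integral _ (Continuous.integrable_of_hasCompactSupport (by fun_prop) ?_)
  refine HasCompactSupport.intro (hFc.image continuous_snd) fun y hy => ?_
  by_contra h
  exact hy ⟨(x, y), subset_tsupport _ (by simpa using h), rfl⟩

theorem continuous_integral_of_hasCompactSupport [OpensMeasurableSpace Y]
    [IsFiniteMeasureOnCompacts ν] (hF : Continuous (uncurry F))
    (hFc : HasCompactSupport (uncurry F)) :
    Continuous fun x => ∫ y, (F x y : ℝ) ∂ν := by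
  refine continuousOn_univ.1 (continuousOn_integral_of_compact_support (hFc.image continuous_snd)
    (by fun_prop) fun x y _ hy => ?_)
  by_contra h
  exact hy ⟨(x, y), subset_tsupport _ (by simpa using h), rfl⟩

theorem hasCompactSupport_integral [R1Space X] (hFc : HasCompactSupport (uncurry F)) :
    HasCompactSupport fun x => ∫ y, (F x y : ℝ) ∂ν := by
  refine HasCompactSupport.intro (hFc.image continuous_fst) fun x hx => ?_
  have h0 (y : Y) : (F x y : ℝ) = 0 := by
    by_contra h
    exact hx ⟨(x, y), subset_tsupport _ (by simpa using h), rfl⟩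
  simp [h0]

theorem continuous_lintegral_of_hasCompactSupport [R1Space Y] [OpensMeasurableSpace Y]
    [IsFiniteMeasureOnCompacts ν] (hF : Continuous (uncurry F))
    (hFc : HasCompactSupport (uncurry F)) :
    Continuous fun x => ∫⁻ y, F x y ∂ν := by
  simp_rw [lintegral_eq_ofReal_integral_of_hasCompactSupport hF hFc]
  exact ENNReal.continuous_ofReal.comp (continuous_integral_of_hasCompactSupport hF hFc)

theorem lintegral_lintegral_eq_ofReal_integral_integral [R1Space X] [R1Space Y]
    [MeasurableSpace X] [OpensMeasurableSpace X] [OpensMeasurableSpace Y] {μ : Measure X}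
    [IsFiniteMeasureOnCompacts μ] [IsFiniteMeasureOnCompacts ν] (hF : Continuous (uncurry F))
    (hFc : HasCompactSupport (uncurry F)) :
    ∫⁻ x, ∫⁻ y, F x y ∂ν ∂μ = ENNReal.ofReal (∫ x, ∫ y, (F x y : ℝ) ∂ν ∂μ) := by
  have hint : Integrable (fun x => ∫ y, (F x y : ℝ) ∂ν) μ :=
    (continuous_integral_of_hasCompactSupport hF hFc).integrable_of_hasCompactSupport
      (hasCompactSupport_integral hFc)
  simp_rw [lintegral_eq_ofReal_integral_of_hasCompactSupport hF hFc]
  exact (ofReal_integral_eq_lintegral_ofReal hint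
    (ae_of_all _ fun x => integral_nonneg fun y => (F x y).2)).symm

theorem lintegral_lintegral_swap_of_hasCompactSupport [R1Space X] [R1Space Y]
    [MeasurableSpace X] [OpensMeasurableSpace X] [OpensMeasurableSpace Y] {μ : Measure X}
    [IsFiniteMeasureOnCompacts μ] [IsFiniteMeasureOnCompacts ν] (hF : Continuous (uncurry F))
    (hFc : HasCompactSupport (uncurry F)) :
    ∫⁻ x, ∫⁻ y, F x y ∂ν ∂μ = ∫⁻ y, ∫⁻ x, F x y ∂μ ∂ν := by
  have hF' : Continuous (uncurry fun y x => F x y) := hF.comp continuous_swap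
  have hFc' : HasCompactSupport (uncurry fun y x => F x y) :=
    hFc.comp_homeomorph (Homeomorph.prodComm Y X)
  rw [lintegral_lintegral_eq_ofReal_integral_integral hF hFc,
    lintegral_lintegral_eq_ofReal_integral_integral hF' hFc',
    integral_integral_swap_of_hasCompactSupport (f := fun x y => (F x y : ℝ)) (by fun_prop)
      (hFc.comp_left NNReal.coe_zero)]

theorem lintegral_lintegral_le_swap_of_isSigmaCompact [LocallyCompactSpace X]
    [LocallyCompactSpace Y] [T2Space X] [T2Space Y] [MeasurableSpace X] [OpensMeasurableSpace X]
    [OpensMeasurableSpace Y] {μ : Measure X} [IsFiniteMeasureOnCompacts μ]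
    [IsFiniteMeasureOnCompacts ν] (hF : Continuous (uncurry F)) {S : Set (X × Y)}
    (hS : IsSigmaCompact S) (hFS : support (uncurry F) ⊆ S) :
    ∫⁻ x, ∫⁻ y, F x y ∂ν ∂μ ≤ ∫⁻ y, ∫⁻ x, F x y ∂μ ∂ν := by
  obtain ⟨θ, hθc, hθs, hθ1, hθS⟩ := hS.exists_cutoff
  let Fn (n : ℕ) (x : X) (y : Y) : ℝ≥0 := θ n (x, y) * F x y
  have hFn (n : ℕ) : Continuous (uncurry (Fn n)) := (hθc n).mul hF
  have hFnc (n : ℕ) : HasCompactSupport (uncurry (Fn n)) := (hθs n).mul_right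
  have hFn_le (n : ℕ) (x : X) (y : Y) : Fn n x y ≤ F x y := mul_le_of_le_one_left' (hθ1 n (x, y))
  have hlim (x : X) (y : Y) : liminf (fun n => (Fn n x y : ℝ≥0∞)) atTop = F x y := by
    by_cases h : F x y = 0
    · simp [Fn, h]
    · rw [liminf_congr (v := fun _ => (F x y : ℝ≥0∞))
        ((hθS (x, y) (hFS h)).mono fun n hn => by simp [Fn, hn]), liminf_const]
  calc ∫⁻ x, ∫⁻ y, F x y ∂ν ∂μ = ∫⁻ x, ∫⁻ y, liminf (fun n => (Fn n x y : ℝ≥0∞)) atTop ∂ν ∂μ := by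
        simp only [hlim]
    _ ≤ ∫⁻ x, liminf (fun n => ∫⁻ y, Fn n x y ∂ν) atTop ∂μ :=
        lintegral_mono fun x => lintegral_liminf_le fun n =>
          ((hFn n).comp (Continuous.prodMk_right x)).measurable.coe_nnreal_ennreal
    _ ≤ liminf (fun n => ∫⁻ x, ∫⁻ y, Fn n x y ∂ν ∂μ) atTop :=
        lintegral_liminf_le fun n =>
          (continuous_lintegral_of_hasCompactSupport (hFn n) (hFnc n)).measurable
    _ = liminf (fun n => ∫⁻ y, ∫⁻ x, Fn n x y ∂μ ∂ν) atTop := by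
        simp only [lintegral_lintegral_swap_of_hasCompactSupport (hFn _) (hFnc _)]
    _ ≤ ∫⁻ y, ∫⁻ x, F x y ∂μ ∂ν :=
        liminf_le_of_frequently_le' (Frequently.of_forall fun n =>
          lintegral_mono fun y => lintegral_mono fun x => coe_le_coe.2 (hFn_le n x y))

end CompactSupport

section Convolution

variable {G : Type*} [Group G] [TopologicalSpace G] [IsTopologicalGroup G] [LocallyCompactSpace G]
  [T2Space G] [MeasurableSpace G] [BorelSpace G] {μ : Measure G} [μ.IsHaarMeasure]
  {k Ψ : G → ℝ≥0}

theorem lintegral_convolution_le_of_lintegral_ne_top (hk : Continuous k) (hΨ : Continuous Ψ)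
    (hkμ : ∫⁻ z, k z ∂μ ≠ ∞) (hΨμ : ∫⁻ x, Ψ x ∂μ ≠ ∞) :
    ∫⁻ x, ∫⁻ z, k z * Ψ (z⁻¹ * x) ∂μ ∂μ ≤ (∫⁻ z, k z ∂μ) * ∫⁻ x, Ψ x ∂μ := by
  obtain ⟨Rk, hRk, hkR⟩ := hk.exists_isSigmaCompact_superset_support μ hkμ
  obtain ⟨RΨ, hRΨ, hΨR⟩ := hΨ.exists_isSigmaCompact_superset_support μ hΨμ
  have hS : IsSigmaCompact ((fun p : G × G => (p.1 * p.2, p.1)) '' Rk ×ˢ RΨ) :=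
    (hRk.prod hRΨ).image (by fun_prop)
  have hsupp : support (uncurry fun x z => k z * Ψ (z⁻¹ * x)) ⊆
      (fun p : G × G => (p.1 * p.2, p.1)) '' Rk ×ˢ RΨ := by
    rintro ⟨x, z⟩ hxz
    obtain ⟨hkz, hΨz⟩ := mul_ne_zero_iff.1 hxz
    exact ⟨(z, z⁻¹ * x), ⟨hkR hkz, hΨR hΨz⟩, by simp⟩
  calc ∫⁻ x, ∫⁻ z, k z * Ψ (z⁻¹ * x) ∂μ ∂μ
        = ∫⁻ x, ∫⁻ z, ((k z * Ψ (z⁻¹ * x) : ℝ≥0) : ℝ≥0∞) ∂μ ∂μ := by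
        simp only [coe_mul]
    _ ≤ ∫⁻ z, ∫⁻ x, ((k z * Ψ (z⁻¹ * x) : ℝ≥0) : ℝ≥0∞) ∂μ ∂μ :=
        lintegral_lintegral_le_swap_of_isSigmaCompact (by fun_prop) hS hsupp
    _ = ∫⁻ z, k z * ∫⁻ x, Ψ x ∂μ ∂μ := by
        refine lintegral_congr fun z => ?_
        simp only [coe_mul]
        rw [lintegral_const_mul' _ _ coe_ne_top,
          lintegral_mul_left_eq_self (fun x => (Ψ x : ℝ≥0∞)) z⁻¹]
    _ = (∫⁻ z, k z ∂μ) * ∫⁻ x, Ψ x ∂μ := lintegral_mul_const _ hk.measurable.coe_nnreal_ennreal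

theorem lintegral_convolution_le (hk : Continuous k) (hΨ : Continuous Ψ) :
    ∫⁻ x, ∫⁻ z, k z * Ψ (z⁻¹ * x) ∂μ ∂μ ≤ (∫⁻ z, k z ∂μ) * ∫⁻ x, Ψ x ∂μ := by
  have eq_zero {f : G → ℝ≥0} (hf : Continuous f) (hf0 : ∫⁻ x, f x ∂μ = 0) (x : G) : f x = 0 := by
    rw [lintegral_eq_zero_iff hf.measurable.coe_nnreal_ennreal,
      Continuous.ae_eq_iff_eq (f := fun x => (f x : ℝ≥0∞)) μ (by fun_prop) continuous_zero] at hf0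
    simpa using congrFun hf0 x
  by_cases htop : (∫⁻ z, k z ∂μ) * ∫⁻ x, Ψ x ∂μ = ∞
  · exact htop ▸ le_top
  rcases eq_or_ne (∫⁻ z, k z ∂μ) 0 with hk0 | hk0
  · simp [eq_zero hk hk0]
  rcases eq_or_ne (∫⁻ x, Ψ x ∂μ) 0 with hΨ0 | hΨ0
  · simp [eq_zero hΨ hΨ0]
  obtain ⟨hkμ, hΨμ⟩ : (∫⁻ z, k z ∂μ) ≠ ∞ ∧ (∫⁻ x, Ψ x ∂μ) ≠ ∞ := by
    simpa [mul_eq_top, hk0, hΨ0, or_comm] using htop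
  exact lintegral_convolution_le_of_lintegral_ne_top hk hΨ hkμ hΨμ

end Convolution

section LocalMax

variable {G : Type*} [Mul G] [TopologicalSpace G] [ContinuousMul G] {U : Set G} {g : G → ℝ≥0}

/-- The paper's `M_U g`. -/
noncomputable def leftLocalMax (U : Set G) (g : G → ℝ≥0) (x : G) : ℝ≥0 :=
  sSup ((fun y => g (x * y)) '' U)

theorem continuous_leftLocalMax (hU : IsCompact U) (hg : Continuous g) :
    Continuous (leftLocalMax U g) :=
  hU.continuous_sSup (f := fun x y => g (x * y)) (by fun_prop)

theorem coe_leftLocalMax (hU : IsCompact U) (hg : Continuous g) (x : G) :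
    (leftLocalMax U g x : ℝ≥0∞) = ⨆ y ∈ U, (g (x * y) : ℝ≥0∞) := by
  rw [leftLocalMax, coe_sSup (hU.bddAbove_image (by fun_prop)), iSup_image]

theorem le_leftLocalMax (hU : IsCompact U) (hg : Continuous g) {y : G} (hy : y ∈ U) (x : G) :
    g (x * y) ≤ leftLocalMax U g x :=
  le_csSup (hU.bddAbove_image (by fun_prop)) (mem_image_of_mem _ hy)

end LocalMax

theorem iSup_lintegral_mul_le_lintegral_leftLocalMax {G : Type*} [Group G] [TopologicalSpace G]
    [IsTopologicalGroup G] [MeasurableSpace G] (μ : Measure G) {U : Set G} (hU : IsCompact U)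
    {f g w : G → ℝ≥0} (hg : Continuous g) (hw : ∀ x y, w (x * y) ≤ w x * w y) (x : G) :
    (⨆ y ∈ U, ∫⁻ z, f z * g (z⁻¹ * (x * y)) ∂μ) * w x ≤
      ∫⁻ z, ↑(f z * w z) * ↑(leftLocalMax U g (z⁻¹ * x) * w (z⁻¹ * x)) ∂μ := by
  have hwx (z : G) : (w x : ℝ≥0∞) ≤ w z * w (z⁻¹ * x) := by
    rw [← coe_mul, coe_le_coe]
    simpa using hw z (z⁻¹ * x)
  calc (⨆ y ∈ U, ∫⁻ z, f z * g (z⁻¹ * (x * y)) ∂μ) * w x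
      ≤ (∫⁻ z, f z * leftLocalMax U g (z⁻¹ * x) ∂μ) * w x := by
        gcongr
        refine iSup₂_le fun y hy => lintegral_mono fun z => ?_
        rw [← mul_assoc]
        gcongr
        exact le_leftLocalMax hU hg hy _
    _ = ∫⁻ z, f z * leftLocalMax U g (z⁻¹ * x) * w x ∂μ :=
        (lintegral_mul_const' _ _ coe_ne_top).symm
    _ ≤ ∫⁻ z, ↑(f z * w z) * ↑(leftLocalMax U g (z⁻¹ * x) * w (z⁻¹ * x)) ∂μ := by
        refine lintegral_mono fun z => ?_
        calc (f z : ℝ≥0∞) * leftLocalMax U g (z⁻¹ * x) * w x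
            ≤ f z * leftLocalMax U g (z⁻¹ * x) * (w z * w (z⁻¹ * x)) := by gcongr; exact hwx z
          _ = ↑(f z * w z) * ↑(leftLocalMax U g (z⁻¹ * x) * w (z⁻¹ * x)) := by
            push_cast; ring

theorem stmt4 {H : Type*} [Group H] [TopologicalSpace H] [IsTopologicalGroup H]
    [LocallyCompactSpace H] [T2Space H] [MeasurableSpace H] [BorelSpace H]
    (μ : Measure H) [μ.IsHaarMeasure]
    (m : H → ℝ) (hmcont : Continuous m) (hmpos : ∀ x, 0 < m x)
    (hmsub : ∀ x y, m (x * y) ≤ m x * m y)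
    (U : Set H) (hU : IsCompact U)
    (f g : H → NNReal) (hf : Continuous f) (hg : Continuous g) :
    (∫⁻ x, (⨆ y ∈ U, ∫⁻ z, (f z : ℝ≥0∞) * (g (z⁻¹ * (x * y)) : ℝ≥0∞) ∂μ) *
        ENNReal.ofReal (m x) ∂μ) ≤
      (∫⁻ x, (f x : ℝ≥0∞) * ENNReal.ofReal (m x) ∂μ) *
        ∫⁻ x, (⨆ y ∈ U, (g (x * y) : ℝ≥0∞)) * ENNReal.ofReal (m x) ∂μ := by
  let w (x : H) : ℝ≥0 := (m x).toNNReal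
  have hw : Continuous w := continuous_real_toNNReal.comp hmcont
  have hwsub (x y : H) : w (x * y) ≤ w x * w y := by
    rw [← Real.toNNReal_mul (hmpos x).le]
    exact Real.toNNReal_le_toNNReal (hmsub x y)
  calc _ ≤ ∫⁻ x, ∫⁻ z, ↑(f z * w z) * ↑(leftLocalMax U g (z⁻¹ * x) * w (z⁻¹ * x)) ∂μ ∂μ :=
        lintegral_mono (iSup_lintegral_mul_le_lintegral_leftLocalMax μ hU hg hwsub)
    _ ≤ (∫⁻ z, ↑(f z * w z) ∂μ) * ∫⁻ x, ↑(leftLocalMax U g x * w x) ∂μ :=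
        lintegral_convolution_le (by fun_prop) ((continuous_leftLocalMax hU hg).mul hw)
    _ = _ := by simp only [coe_mul, coe_leftLocalMax hU hg]; rfl
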